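/- arXiv:1812.07247 — 3 statements merged into one kernel-verified Lean document; each statement's English description precedes it below -/
import Mathlib

section
/- Let n ≥ 1. Every elliptic element g of Sp(n,1) (defined by the form J₁), i.e., every g ∈ Sp(n,1) fixing a point of ℍHⁿ, is conjugate within Sp(n,1) to a diagonal matrix diag(λ₁, …, λ_{n+1}) with λᵢ ∈ ℍ and |λᵢ| = 1 for all 1 ≤ i ≤ n+1. -/
noncomputable section
open Matrix

abbrev Hq : Type := Quaternion ℝ

/-- The diagonal matrix `J₁ = diag(-1, 1, …, 1)` of the Hermitian form. -/
def J1 (n : ℕ) : Matrix (Fin (n+1)) (Fin (n+1)) Hq :=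
  Matrix.diagonal fun i => if (i : ℕ) = 0 then -1 else 1

/-- The value `v* J v` of the Hermitian form on a vector `v`. -/
def qform {n : ℕ} (J : Matrix (Fin n) (Fin n) Hq) (v : Fin n → Hq) : Hq :=
  dotProduct (fun i => star (v i)) (J.mulVec v)

/-- `w` spans the same right quaternionic line as `v`. -/
def SameLine {n : ℕ} (v w : Fin n → Hq) : Prop :=
  ∃ q : Hq, q ≠ 0 ∧ w = fun i => v i * q

/-- `A` fixes the right quaternionic line spanned by `v`, i.e. `A v ∈ v ℍ`. -/
def FixesLine {n : ℕ} (A : Matrix (Fin n) (Fin n) Hq) (v : Fin n → Hq) : Prop :=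
  ∃ q : Hq, A.mulVec v = fun i => v i * q

/-- `A` is loxodromic w.r.t. the Hermitian form `J`: it fixes exactly two points of the
boundary (null lines) and no point of hyperbolic space (negative lines). -/
def IsLoxodromic {n : ℕ} (J A : Matrix (Fin n) (Fin n) Hq) : Prop :=
  (∀ v : Fin n → Hq, v ≠ 0 → (qform J v).re < 0 → ¬ FixesLine A v) ∧
  ∃ v w : Fin n → Hq, v ≠ 0 ∧ w ≠ 0 ∧ (qform J v).re = 0 ∧ (qform J w).re = 0 ∧
    ¬ SameLine v w ∧ FixesLine A v ∧ FixesLine A w ∧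
    ∀ u : Fin n → Hq, u ≠ 0 → (qform J u).re = 0 → FixesLine A u →
      (SameLine u v ∨ SameLine u w)

/-- `Sp(n,1)` (w.r.t. the form `J₁`) as a set of matrices. -/
def SpSet1 (n : ℕ) : Set (Matrix (Fin (n+1)) (Fin (n+1)) Hq) :=
  {A | IsUnit A ∧ Aᴴ * J1 n * A = J1 n}

/-- `A` is elliptic w.r.t. `J₁`: it fixes a point of `ℍHⁿ`, i.e. a negative line. -/
def IsElliptic {n : ℕ} (J A : Matrix (Fin n) (Fin n) Hq) : Prop :=
  ∃ v : Fin n → Hq, v ≠ 0 ∧ (qform J v).re < 0 ∧ FixesLine A v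

/-!
An elliptic `g` fixes a negative line `vℍ`. Rescaling `v` by a quaternion makes `v* J₁ v = -1`
and its first coordinate real and nonnegative; the `J₁`-reflection in `v + e₀` then lies in
`Sp(n,1)` and exchanges the lines of `v` and `e₀`. After conjugating by it, `g` fixes `e₀ℍ`,
hence its `J₁`-orthogonal complement, so it is `diag(μ, B)` with `|μ| = 1` and `B ∈ Sp(n)`.
The same argument for the form `1` diagonalises `B` by induction on the size; there the fixed
line is a right eigenvector, which exists because right multiplication by `ℂ ⊆ ℍ` makes `ℍᵐ`
a finite-dimensional complex vector space on which matrices act `ℂ`-linearly.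
-/

open Quaternion

instance : StarModule ℝ Hq := ⟨fun r a => by rw [Quaternion.star_smul, star_trivial r]⟩

lemma norm_eq_one_of_star_mul_self_eq_one {q : Hq} (h : star q * q = 1) : ‖q‖ = 1 := by
  have h2 : ‖q‖ * ‖q‖ = 1 := by rw [← CStarRing.norm_star_mul_self, h, norm_one]
  nlinarith [norm_nonneg q]

lemma exists_norm_eq_one_mul_eq_norm (x : Hq) : ∃ φ : Hq, ‖φ‖ = 1 ∧ x * φ = ‖x‖ := by
  rcases eq_or_ne x 0 with rfl | hx
  · exact ⟨1, norm_one, by simp⟩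
  have hx' : ‖x‖ ≠ 0 := norm_ne_zero_iff.2 hx
  refine ⟨star x * (‖x‖⁻¹ : ℝ), ?_, ?_⟩
  · rw [norm_mul, norm_star, norm_coe, norm_inv, norm_norm, mul_inv_cancel₀ hx']
  · rw [← mul_assoc, self_mul_star, normSq_eq_norm_mul_self, ← coe_mul, mul_assoc,
      mul_inv_cancel₀ hx', mul_one]

section StarRing

variable {α ι : Type*} [Ring α] [StarRing α] [Fintype ι]

lemma isometry_mul {J A B : Matrix ι ι α} (hA : Aᴴ * J * A = J) (hB : Bᴴ * J * B = J) :
    (A * B)ᴴ * J * (A * B) = J := by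
  rw [conjTranspose_mul, show Bᴴ * Aᴴ * J * (A * B) = Bᴴ * (Aᴴ * J * A) * B by noncomm_ring,
    hA, hB]

lemma conjTranspose_eq_of_mul_self [DecidableEq ι] {H : Matrix ι ι α} (hH : Hᴴ * H = 1)
    (hHH : H * H = 1) : Hᴴ = H := by
  rw [← Matrix.mul_one Hᴴ, ← hHH, ← Matrix.mul_assoc, hH, Matrix.one_mul]

end StarRing

lemma Matrix.mulVec_mul_const {ι κ : Type*} [Fintype κ] (A : Matrix ι κ Hq) (x : κ → Hq)
    (q : Hq) : A *ᵥ (fun i => x i * q) = fun i => (A *ᵥ x) i * q := by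
  ext1 i
  simp only [mulVec, dotProduct, Finset.sum_mul, mul_assoc]

abbrev rightComplexModule (ι : Type*) : Module ℂ (ι → Hq) :=
  Module.compHom (ι → Hq) ((ofComplex.toOpposite fun z w => by
    simp only [Commute, SemiconjBy, ← map_mul, mul_comm z w]) : ℂ →+* Hqᵐᵒᵖ)

lemma exists_ne_zero_fixesLine {m : ℕ} [NeZero m] (B : Matrix (Fin m) (Fin m) Hq) :
    ∃ x, x ≠ 0 ∧ FixesLine B x := by
  let _ := rightComplexModule (Fin m)
  have : IsScalarTower ℝ ℂ (Fin m → Hq) := ⟨fun r z x => funext fun i => by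
    change x i * ofComplex (r • z) = r • (x i * ofComplex z)
    rw [map_smul, mul_smul_comm]⟩
  have : FiniteDimensional ℂ (Fin m → Hq) := Module.Finite.of_restrictScalars_finite ℝ ℂ _
  let T : Module.End ℂ (Fin m → Hq) :=
    { toFun := (B *ᵥ ·)
      map_add' := B.mulVec_add
      map_smul' := fun z x => B.mulVec_mul_const x (ofComplex z) }
  obtain ⟨z, hz⟩ := Module.End.exists_eigenvalue T
  obtain ⟨x, hx⟩ := hz.exists_hasEigenvector
  exact ⟨x, hx.2, ofComplex z, hx.apply_eq_smul⟩

lemma FixesLine.mul_const {n : ℕ} {A : Matrix (Fin n) (Fin n) Hq} {v : Fin n → Hq}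
    (h : FixesLine A v) (p : Hq) : FixesLine A (fun i => v i * p) := by
  obtain ⟨q, hq⟩ := h
  refine ⟨p⁻¹ * q * p, ?_⟩
  rw [mulVec_mul_const, hq]
  funext i
  rcases eq_or_ne p 0 with rfl | hp
  · simp
  · simp only [mul_assoc, mul_inv_cancel_left₀ hp]

section HermitianForm

variable {ι : Type*} [Fintype ι]

def hform (J : Matrix ι ι Hq) (x y : ι → Hq) : Hq :=
  star x ⬝ᵥ (J *ᵥ y)

lemma hform_add_left (J : Matrix ι ι Hq) (x y z : ι → Hq) :
    hform J (x + y) z = hform J x z + hform J y z := by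
  simp only [hform, star_add, add_dotProduct]

lemma hform_add_right (J : Matrix ι ι Hq) (x y z : ι → Hq) :
    hform J x (y + z) = hform J x y + hform J x z := by
  simp only [hform, mulVec_add, dotProduct_add]

lemma hform_mul_const_left (J : Matrix ι ι Hq) (x y : ι → Hq) (q : Hq) :
    hform J (fun i => x i * q) y = star q * hform J x y := by
  simp only [hform, dotProduct, Pi.star_apply, star_mul, Finset.mul_sum, mul_assoc]

lemma hform_mul_const_right (J : Matrix ι ι Hq) (x y : ι → Hq) (q : Hq) :
    hform J x (fun i => y i * q) = hform J x y * q := by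
  simp only [hform, mulVec_mul_const, dotProduct, Finset.sum_mul, mul_assoc]

lemma hform_mulVec_mulVec (J A : Matrix ι ι Hq) (x y : ι → Hq) :
    hform J (A *ᵥ x) (A *ᵥ y) = hform (Aᴴ * J * A) x y := by
  rw [hform, hform, star_mulVec, dotProduct_mulVec, vecMul_vecMul, ← dotProduct_mulVec,
    mulVec_mulVec]

lemma star_hform {J : Matrix ι ι Hq} (hJ : J.IsHermitian) (x y : ι → Hq) :
    star (hform J x y) = hform J y x := by
  rw [hform, hform, star_dotProduct, star_star, star_mulVec, hJ.eq, dotProduct_mulVec]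

lemma hform_self_eq_re {J : Matrix ι ι Hq} (hJ : J.IsHermitian) (x : ι → Hq) :
    hform J x x = ((hform J x x).re : Hq) :=
  star_eq_self.1 (star_hform hJ x x)

lemma re_hform_one_self_pos [DecidableEq ι] {x : ι → Hq} (hx : x ≠ 0) :
    0 < (hform 1 x x).re := by
  obtain ⟨i, hi⟩ := Function.ne_iff.1 hx
  have hsum : (hform 1 x x).re = ∑ j, normSq (x j) := by
    simp only [hform, one_mulVec, dotProduct, Pi.star_apply, star_mul_self]
    exact map_sum (QuaternionAlgebra.reₗ _ _ _) _ _
  rw [hsum]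
  exact Finset.sum_pos' (fun j _ => normSq_nonneg)
    ⟨i, Finset.mem_univ i, normSq_nonneg.lt_of_ne (normSq_ne_zero.2 hi).symm⟩

lemma vecMulVec_mul_vecMulVec_star {J : Matrix ι ι Hq} {w : ι → Hq} {ρ : ℝ}
    (hw : hform J w w = ρ) :
    vecMulVec w (star w) * J * vecMulVec w (star w) = ρ • vecMulVec w (star w) := by
  rw [vecMulVec_mul, vecMulVec_mul_vecMulVec, ← dotProduct_mulVec]
  refine Matrix.ext fun i j => ?_
  change w i * (hform J w w * star (w j)) = ρ • (w i * star (w j))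
  rw [hw, coe_mul_eq_smul, mul_smul_comm]

end HermitianForm

section Reflection

variable {ι : Type*} [Fintype ι] [DecidableEq ι] {J : Matrix ι ι Hq} {w : ι → Hq} {ρ : ℝ}

def reflection (J : Matrix ι ι Hq) (w : ι → Hq) : Matrix ι ι Hq :=
  1 - (2 / (hform J w w).re) • (vecMulVec w (star w) * J)

lemma reflection_eq (hw : hform J w w = ρ) :
    reflection J w = 1 - (2 / ρ) • (vecMulVec w (star w) * J) := by
  rw [reflection, hw, re_coe]

lemma reflection_mul_self (hw : hform J w w = ρ) (hρ : ρ ≠ 0) :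
    reflection J w * reflection J w = 1 := by
  have key : vecMulVec w (star w) * J * (vecMulVec w (star w) * J) =
      ρ • (vecMulVec w (star w) * J) := by
    rw [← Matrix.mul_assoc, vecMulVec_mul_vecMulVec_star hw, Matrix.smul_mul]
  rw [reflection_eq hw]
  simp only [sub_mul, mul_sub, Matrix.one_mul, Matrix.mul_one, Matrix.smul_mul, Matrix.mul_smul,
    key, smul_smul]
  rw [show 2 / ρ * (2 / ρ * ρ) = 2 / ρ + 2 / ρ by field_simp; ring, add_smul]
  abel

lemma conjTranspose_reflection_mul (hJ : J.IsHermitian) (hw : hform J w w = ρ) :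
    (reflection J w)ᴴ * J = J * reflection J w := by
  rw [reflection_eq hw]
  simp only [conjTranspose_sub, conjTranspose_one, conjTranspose_smul, star_trivial,
    conjTranspose_mul, conjTranspose_vecMulVec, star_star, hJ.eq, sub_mul, mul_sub,
    Matrix.one_mul, Matrix.mul_one, Matrix.smul_mul, Matrix.mul_smul, Matrix.mul_assoc]

lemma reflection_isometry (hJ : J.IsHermitian) (hw : hform J w w = ρ) (hρ : ρ ≠ 0) :
    (reflection J w)ᴴ * J * reflection J w = J := by
  rw [conjTranspose_reflection_mul hJ hw, Matrix.mul_assoc, reflection_mul_self hw hρ,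
    Matrix.mul_one]

lemma reflection_mulVec (hw : hform J w w = ρ) (x : ι → Hq) :
    reflection J w *ᵥ x = x - fun i => w i * ((2 / ρ : ℝ) * hform J w x) := by
  rw [reflection_eq hw, sub_mulVec, one_mulVec, smul_mulVec, ← mulVec_mulVec, vecMulVec_mulVec]
  funext i
  change x i - (2 / ρ) • (w i * hform J w x) = x i - w i * ((2 / ρ : ℝ) * hform J w x)
  rw [coe_mul_eq_smul, mul_smul_comm]

end Reflection

section DiagCons

variable {α : Type*} {m : ℕ}

/-- The block-diagonal matrix `diag(q, U)`. -/
def diagCons [Zero α] (q : α) (U : Matrix (Fin m) (Fin m) α) :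
    Matrix (Fin (m + 1)) (Fin (m + 1)) α :=
  Matrix.of (Fin.cons (Fin.cons q 0) fun i => Fin.cons 0 (U i))

section Zero

variable [Zero α] (q : α) (U : Matrix (Fin m) (Fin m) α)

@[simp] lemma diagCons_zero_zero : diagCons q U 0 0 = q := rfl
@[simp] lemma diagCons_zero_succ (j : Fin m) : diagCons q U 0 j.succ = 0 := rfl
@[simp] lemma diagCons_succ_zero (i : Fin m) : diagCons q U i.succ 0 = 0 := rfl
@[simp] lemma diagCons_succ_succ (i j : Fin m) : diagCons q U i.succ j.succ = U i j := rfl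

lemma eq_diagCons {M : Matrix (Fin (m + 1)) (Fin (m + 1)) α}
    (hcol : ∀ i : Fin m, M i.succ 0 = 0) (hrow : ∀ j : Fin m, M 0 j.succ = 0) :
    M = diagCons (M 0 0) (M.submatrix Fin.succ Fin.succ) := by
  ext i j
  cases i using Fin.cases <;> cases j using Fin.cases <;> simp [hcol, hrow]

lemma diagCons_injective {q q' : α} {U U' : Matrix (Fin m) (Fin m) α}
    (h : diagCons q U = diagCons q' U') : q = q' ∧ U = U' :=
  ⟨congrFun (congrFun h 0) 0, Matrix.ext fun i j => congrFun (congrFun h i.succ) j.succ⟩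

lemma diagCons_diagonal (d : Fin m → α) :
    diagCons q (diagonal d) = diagonal (Fin.cons q d) := by
  ext i j
  cases i using Fin.cases <;> cases j using Fin.cases <;>
    simp [diagonal_apply, (Fin.succ_ne_zero _).symm]

end Zero

lemma diagCons_mul [NonUnitalNonAssocSemiring α] (q r : α) (U V : Matrix (Fin m) (Fin m) α) :
    diagCons q U * diagCons r V = diagCons (q * r) (U * V) := by
  ext i j
  cases i using Fin.cases <;> cases j using Fin.cases <;> simp [mul_apply, Fin.sum_univ_succ]

lemma diagCons_one [Zero α] [One α] : diagCons (1 : α) (1 : Matrix (Fin m) (Fin m) α) = 1 := by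
  rw [← diagonal_one, diagCons_diagonal, ← diagonal_one]
  congr 1
  ext i
  cases i using Fin.cases <;> rfl

lemma conjTranspose_diagCons [AddMonoid α] [StarAddMonoid α] (q : α)
    (U : Matrix (Fin m) (Fin m) α) : (diagCons q U)ᴴ = diagCons (star q) Uᴴ := by
  ext i j
  cases i using Fin.cases <;> cases j using Fin.cases <;> simp

lemma mulVec_diagCons [NonUnitalNonAssocSemiring α] (q : α) (U : Matrix (Fin m) (Fin m) α)
    (x : Fin (m + 1) → α) : diagCons q U *ᵥ x = Fin.cons (q * x 0) (U *ᵥ Fin.tail x) := by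
  ext i
  cases i using Fin.cases <;> simp [mulVec, dotProduct, Fin.sum_univ_succ, Fin.tail]

lemma Fin.tail_single_zero [Zero α] (a : α) :
    Fin.tail (Pi.single (0 : Fin (m + 1)) a : Fin (m + 1) → α) = 0 :=
  funext fun i => Pi.single_eq_of_ne (Fin.succ_ne_zero i) a

section Conjugation

variable [Ring α] [StarRing α] {g H : Matrix (Fin (m + 1)) (Fin (m + 1)) α} {μ : α}
  {B U : Matrix (Fin m) (Fin m) α} {lam : Fin m → α}

lemma conj_diagCons_mul_inv_eq_one (hHH : H * H = 1) (hU : Uᴴ * U = 1) :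
    diagCons 1 Uᴴ * H * (H * diagCons 1 U) = 1 := by
  rw [Matrix.mul_assoc, ← Matrix.mul_assoc H, hHH, Matrix.one_mul, diagCons_mul, one_mul, hU,
    diagCons_one]

lemma inv_mul_conj_diagCons_eq_one (hHH : H * H = 1) (hU : U * Uᴴ = 1) :
    H * diagCons 1 U * (diagCons 1 Uᴴ * H) = 1 := by
  rw [← Matrix.mul_assoc, Matrix.mul_assoc H, diagCons_mul, one_mul, hU, diagCons_one,
    Matrix.mul_one, hHH]

lemma conj_diagCons_eq_diagonal (hHg : H * g * H = diagCons μ B)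
    (hUB : Uᴴ * B * U = diagonal lam) :
    diagCons 1 Uᴴ * H * g * (H * diagCons 1 U) = diagonal (Fin.cons μ lam) := by
  rw [show diagCons 1 Uᴴ * H * g * (H * diagCons 1 U) =
      diagCons 1 Uᴴ * (H * g * H) * diagCons 1 U by noncomm_ring,
    hHg, diagCons_mul, diagCons_mul, one_mul, mul_one, hUB, diagCons_diagonal]

lemma diagCons_one_isometry (ε : α) (hU : Uᴴ * U = 1) :
    (diagCons 1 U)ᴴ * diagCons ε 1 * diagCons 1 U = diagCons ε 1 := by
  rw [conjTranspose_diagCons, star_one, diagCons_mul, diagCons_mul, one_mul, mul_one,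
    Matrix.mul_one, hU]

end Conjugation

end DiagCons

section SignatureForm

variable {m : ℕ} {ε : ℝ}

lemma hform_diagCons (q : Hq) (U : Matrix (Fin m) (Fin m) Hq) (x y : Fin (m + 1) → Hq) :
    hform (diagCons q U) x y = star (x 0) * (q * y 0) + hform U (Fin.tail x) (Fin.tail y) := by
  simp [hform, mulVec_diagCons, dotProduct, Fin.sum_univ_succ, Fin.tail]

lemma isHermitian_diagCons_one (ε : ℝ) :
    (diagCons (ε : Hq) (1 : Matrix (Fin m) (Fin m) Hq)).IsHermitian := by
  rw [IsHermitian, conjTranspose_diagCons, conjTranspose_one, star_coe]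

lemma hform_diagCons_single_zero_left (y : Fin (m + 1) → Hq) :
    hform (diagCons (ε : Hq) 1) (Pi.single 0 1) y = ε * y 0 := by
  rw [hform_diagCons]
  simp [hform, Fin.tail_single_zero]

lemma hform_diagCons_single_zero_right (x : Fin (m + 1) → Hq) :
    hform (diagCons (ε : Hq) 1) x (Pi.single 0 1) = star (x 0) * ε := by
  rw [hform_diagCons]
  simp [hform, Fin.tail_single_zero]

/-- Reflecting in `a + e₀` rather than `a - e₀` avoids the degenerate case `a = e₀`. -/
lemma exists_isometry_mulVec_single_zero (hε : ε ≠ 0) {a : Fin (m + 1) → Hq} {t : ℝ}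
    (ht : 0 ≤ t) (ha : hform (diagCons (ε : Hq) 1) a a = ε) (ha0 : a 0 = t) :
    ∃ H : Matrix (Fin (m + 1)) (Fin (m + 1)) Hq,
      Hᴴ * diagCons (ε : Hq) 1 * H = diagCons (ε : Hq) 1 ∧ H * H = 1 ∧
      H *ᵥ Pi.single 0 1 = -a := by
  set J := diagCons (ε : Hq) (1 : Matrix (Fin m) (Fin m) Hq)
  set w := a + Pi.single 0 1
  have hwe : hform J w (Pi.single 0 1) = ((ε * (t + 1) : ℝ) : Hq) := by
    rw [hform_add_left, hform_diagCons_single_zero_right, hform_diagCons_single_zero_right, ha0]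
    simp only [Pi.single_eq_same, star_coe, star_one]
    norm_cast
    congr 1
    ring
  have hww : hform J w w = ((2 * ε * (t + 1) : ℝ) : Hq) := by
    rw [hform_add_right, hwe, hform_add_left, ha, hform_diagCons_single_zero_left, ha0]
    norm_cast
    congr 1
    ring
  have hρ : 2 * ε * (t + 1) ≠ 0 := by positivity
  refine ⟨reflection J w, reflection_isometry (isHermitian_diagCons_one ε) hww hρ,
    reflection_mul_self hww hρ, ?_⟩
  rw [reflection_mulVec hww, hwe, ← coe_mul,
    show 2 / (2 * ε * (t + 1)) * (ε * (t + 1)) = 1 by field_simp, coe_one]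
  funext i
  simp only [w, Pi.sub_apply, Pi.add_apply, Pi.neg_apply, mul_one]
  abel

lemma exists_eq_diagCons_of_isometry (hε : ε ≠ 0) {M : Matrix (Fin (m + 1)) (Fin (m + 1)) Hq}
    (hM : Mᴴ * diagCons (ε : Hq) 1 * M = diagCons (ε : Hq) 1) {μ : Hq}
    (hMe : M *ᵥ Pi.single 0 1 = fun i => (Pi.single 0 1 : Fin (m + 1) → Hq) i * μ) :
    ∃ B : Matrix (Fin m) (Fin m) Hq, M = diagCons μ B ∧ ‖μ‖ = 1 ∧ Bᴴ * B = 1 := by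
  set J := diagCons (ε : Hq) (1 : Matrix (Fin m) (Fin m) Hq)
  have hpres : ∀ x y, hform J (M *ᵥ x) (M *ᵥ y) = hform J x y := fun x y => by
    rw [hform_mulVec_mulVec, hM]
  have hε' : (ε : Hq) ≠ 0 := by rwa [Ne, ← coe_zero, coe_inj]
  have hcol : ∀ i, M i 0 = (Pi.single 0 1 : Fin (m + 1) → Hq) i * μ := fun i => by
    simpa using congrFun hMe i
  have hμ : star μ * μ = 1 := by
    have h := hpres (Pi.single 0 1) (Pi.single 0 1)
    rw [hMe, hform_mul_const_left, hform_mul_const_right, hform_diagCons_single_zero_left,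
      Pi.single_eq_same, mul_one, ← mul_assoc, ← coe_commutes, mul_assoc] at h
    exact (mul_eq_left₀ hε').1 h
  have hrow : ∀ j : Fin m, M 0 j.succ = 0 := fun j => by
    have h := hpres (Pi.single 0 1) (Pi.single j.succ 1)
    rw [hMe, hform_mul_const_left, hform_diagCons_single_zero_left, mulVec_single_one,
      hform_diagCons_single_zero_left, Pi.single_eq_of_ne (Fin.succ_ne_zero j).symm,
      mul_zero] at h
    simpa [hε', left_ne_zero_of_mul_eq_one hμ] using h
  obtain ⟨B, hB⟩ : ∃ B, M = diagCons μ B := ⟨_, by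
    simpa [hcol] using eq_diagCons (fun i => by simp [hcol]) hrow⟩
  refine ⟨B, hB, norm_eq_one_of_star_mul_self_eq_one hμ, ?_⟩
  rw [hB, conjTranspose_diagCons, diagCons_mul, diagCons_mul, Matrix.mul_one] at hM
  exact (diagCons_injective hM).2

lemma exists_normalized_mul_const {J : Matrix (Fin (m + 1)) (Fin (m + 1)) Hq}
    {v : Fin (m + 1) → Hq} {r : ℝ} (hr : 0 < r) (hv : hform J v v = ((ε * r : ℝ) : Hq)) :
    ∃ p : Hq, p ≠ 0 ∧ hform J (fun i => v i * p) (fun i => v i * p) = ε ∧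
      ∃ t : ℝ, 0 ≤ t ∧ v 0 * p = t := by
  obtain ⟨φ, hφ, hvφ⟩ := exists_norm_eq_one_mul_eq_norm (v 0)
  set s := (√r)⁻¹
  have hs : 0 < s := inv_pos.2 (Real.sqrt_pos.2 hr)
  have hsr : s * s * r = 1 := by
    rw [← mul_inv, Real.mul_self_sqrt hr.le, inv_mul_cancel₀ hr.ne']
  have hφ0 : φ ≠ 0 := norm_ne_zero_iff.1 (hφ ▸ one_ne_zero)
  have hs0 : (s : Hq) ≠ 0 := by rw [Ne, ← coe_zero, coe_inj]; exact hs.ne'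
  refine ⟨φ * s, mul_ne_zero hφ0 hs0, ?_, ‖v 0‖ * s, by positivity,
    by rw [← mul_assoc, hvφ, coe_mul]⟩
  rw [hform_mul_const_left, hform_mul_const_right, hv, ← mul_assoc, ← coe_commutes, mul_assoc,
    star_mul_self, normSq_eq_norm_mul_self, norm_mul, hφ, norm_coe, Real.norm_of_nonneg hs.le]
  rw [← coe_mul]
  congr 1
  linear_combination ε * hsr

lemma exists_isometry_conj_eq_diagCons (hε : ε ≠ 0) {g : Matrix (Fin (m + 1)) (Fin (m + 1)) Hq}
    (hg : gᴴ * diagCons (ε : Hq) 1 * g = diagCons (ε : Hq) 1) {v : Fin (m + 1) → Hq} {r : ℝ}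
    (hr : 0 < r) (hv : hform (diagCons (ε : Hq) 1) v v = ((ε * r : ℝ) : Hq))
    (hgv : FixesLine g v) :
    ∃ (H : Matrix (Fin (m + 1)) (Fin (m + 1)) Hq) (μ : Hq) (B : Matrix (Fin m) (Fin m) Hq),
      Hᴴ * diagCons (ε : Hq) 1 * H = diagCons (ε : Hq) 1 ∧ H * H = 1 ∧
      H * g * H = diagCons μ B ∧ ‖μ‖ = 1 ∧ Bᴴ * B = 1 := by
  obtain ⟨p, -, ha, t, ht, ha0⟩ := exists_normalized_mul_const hr hv
  obtain ⟨H, hHJ, hHH, hHe⟩ := exists_isometry_mulVec_single_zero hε ht ha ha0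
  have hHa : H *ᵥ (fun i => v i * p) = -Pi.single 0 1 := by
    rw [← neg_neg (fun i => v i * p), mulVec_neg, ← hHe, mulVec_mulVec, hHH, one_mulVec]
  obtain ⟨μ, hgvp⟩ := hgv.mul_const p
  have hMe : (H * g * H) *ᵥ Pi.single 0 1 =
      fun i => (Pi.single 0 1 : Fin (m + 1) → Hq) i * μ := by
    rw [← mulVec_mulVec, ← mulVec_mulVec, hHe, mulVec_neg, mulVec_neg, hgvp, mulVec_mul_const,
      hHa]
    funext i
    simp
  obtain ⟨B, hB, hμ, hBB⟩ :=
    exists_eq_diagCons_of_isometry hε (isometry_mul (isometry_mul hHJ hg) hHJ) hMe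
  exact ⟨H, μ, B, hHJ, hHH, hB, hμ, hBB⟩

end SignatureForm

theorem exists_unitary_conj_eq_diagonal {m : ℕ} (B : Matrix (Fin m) (Fin m) Hq)
    (hB : Bᴴ * B = 1) : ∃ (U : Matrix (Fin m) (Fin m) Hq) (lam : Fin m → Hq),
      Uᴴ * U = 1 ∧ U * Uᴴ = 1 ∧ (∀ i, ‖lam i‖ = 1) ∧ Uᴴ * B * U = diagonal lam := by
  induction m with
  | zero => exact ⟨1, finZeroElim, by simp, by simp, finZeroElim, Subsingleton.elim _ _⟩
  | succ m ih =>
    have hJ : diagCons ((1 : ℝ) : Hq) (1 : Matrix (Fin m) (Fin m) Hq) = 1 := by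
      rw [coe_one, diagCons_one]
    obtain ⟨x, hx, hBx⟩ := exists_ne_zero_fixesLine B
    obtain ⟨H, μ, B', hH, hHH, hHB, hμ, hB'⟩ := exists_isometry_conj_eq_diagCons one_ne_zero
      (by rwa [hJ, Matrix.mul_one]) (re_hform_one_self_pos hx)
      (by rw [hJ, one_mul]; exact hform_self_eq_re isHermitian_one x) hBx
    rw [hJ, Matrix.mul_one] at hH
    obtain ⟨U, lam, hU, hU', hlam, hUB⟩ := ih B' hB'
    have hstar : (H * diagCons 1 U)ᴴ = diagCons 1 Uᴴ * H := by
      rw [conjTranspose_mul, conjTranspose_diagCons, star_one,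
        conjTranspose_eq_of_mul_self hH hHH]
    refine ⟨H * diagCons 1 U, Fin.cons μ lam, ?_, ?_, Fin.cases hμ hlam, ?_⟩
    · rw [hstar, conj_diagCons_mul_inv_eq_one hHH hU]
    · rw [hstar, inv_mul_conj_diagCons_eq_one hHH hU']
    · rw [hstar, conj_diagCons_eq_diagonal hHB hUB]

lemma J1_eq_diagCons (n : ℕ) : J1 n = diagCons ((-1 : ℝ) : Hq) 1 := by
  rw [← diagonal_one, diagCons_diagonal, J1]
  congr 1
  funext i
  cases i using Fin.cases <;> simp

theorem stmt10_general (n : ℕ)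
    (g : Matrix (Fin (n+1)) (Fin (n+1)) Hq) (hg : g ∈ SpSet1 n)
    (hell : IsElliptic (J1 n) g) :
    ∃ (C Ci : Matrix (Fin (n+1)) (Fin (n+1)) Hq) (lam : Fin (n+1) → Hq),
      C ∈ SpSet1 n ∧ C * Ci = 1 ∧ Ci * C = 1 ∧ (∀ i, ‖lam i‖ = 1) ∧
      C * g * Ci = Matrix.diagonal lam := by
  obtain ⟨-, hgJ⟩ := hg
  obtain ⟨v, -, hv, hgv⟩ := hell
  rw [J1_eq_diagCons] at hgJ hv
  have hvre : hform (diagCons ((-1 : ℝ) : Hq) 1) v v =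
      ((-1 * -(qform (diagCons ((-1 : ℝ) : Hq) 1) v).re : ℝ) : Hq) := by
    rw [neg_one_mul, neg_neg]
    exact hform_self_eq_re (isHermitian_diagCons_one _) v
  obtain ⟨H, μ, B, hH, hHH, hHg, hμ, hB⟩ :=
    exists_isometry_conj_eq_diagCons (by norm_num) hgJ (neg_pos.2 hv) hvre hgv
  obtain ⟨U, lam, hU, hU', hlam, hUB⟩ := exists_unitary_conj_eq_diagonal B hB
  have hCCi := conj_diagCons_mul_inv_eq_one hHH hU
  have hCiC := inv_mul_conj_diagCons_eq_one hHH hU'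
  refine ⟨_, _, Fin.cons μ lam, ⟨⟨⟨_, _, hCCi, hCiC⟩, rfl⟩, ?_⟩, hCCi, hCiC, Fin.cases hμ hlam,
    conj_diagCons_eq_diagonal hHg hUB⟩
  rw [J1_eq_diagCons]
  exact isometry_mul (diagCons_one_isometry _ (by rwa [conjTranspose_conjTranspose])) hH

theorem stmt10 (n : ℕ) (hn : 1 ≤ n)
    (g : Matrix (Fin (n+1)) (Fin (n+1)) Hq) (hg : g ∈ SpSet1 n)
    (hell : IsElliptic (J1 n) g) :
    ∃ (C Ci : Matrix (Fin (n+1)) (Fin (n+1)) Hq) (lam : Fin (n+1) → Hq),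
      C ∈ SpSet1 n ∧ C * Ci = 1 ∧ Ci * C = 1 ∧ (∀ i, ‖lam i‖ = 1) ∧
      C * g * Ci = Matrix.diagonal lam :=
  stmt10_general n g hg hell
end
end

section
/- Let z₁, z₂, z₃, z₄ be pairwise distinct quaternions. Then [z₁, z₂, z₃, z₄] + [z₂, z₁, z₃, z₄] = 1. -/
noncomputable section

/-- The quaternionic cross ratio
`[z₁, z₂, z₃, z₄] = (z₁ − z₃)(z₁ − z₂)⁻¹(z₂ − z₄)(z₃ − z₄)⁻¹`. -/
def crossRatio (z1 z2 z3 z4 : Quaternion ℝ) : Quaternion ℝ :=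
  (z1 - z3) * (z1 - z2)⁻¹ * (z2 - z4) * (z3 - z4)⁻¹

theorem stmt11 (z1 z2 z3 z4 : Quaternion ℝ)
    (h12 : z1 ≠ z2) (h13 : z1 ≠ z3) (h14 : z1 ≠ z4)
    (h23 : z2 ≠ z3) (h24 : z2 ≠ z4) (h34 : z3 ≠ z4) :
    crossRatio z1 z2 z3 z4 + crossRatio z2 z1 z3 z4 = 1 := by
  have ha : z1 - z2 ≠ 0 := sub_ne_zero.mpr h12
  have hd : z3 - z4 ≠ 0 := sub_ne_zero.mpr h34
  have hinv : (z2 - z1)⁻¹ = -(z1 - z2)⁻¹ := by rw [← neg_sub, inv_neg]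
  have key : (z1 - z3) * (z1 - z2)⁻¹ * (z2 - z4)
      + (z2 - z3) * (-(z1 - z2)⁻¹) * (z1 - z4) = z3 - z4 := by
    have h1 : z1 - z3 = (z2 - z3) + (z1 - z2) := by abel
    have h2 : z1 - z4 = (z2 - z4) + (z1 - z2) := by abel
    rw [h1, h2]
    have e1 : ((z2 - z3) + (z1 - z2)) * (z1 - z2)⁻¹ * (z2 - z4)
        = (z2 - z3) * (z1 - z2)⁻¹ * (z2 - z4) + (z2 - z4) := by
      rw [add_mul, add_mul, mul_inv_cancel₀ ha, one_mul]
    have e2 : (z2 - z3) * (-(z1 - z2)⁻¹) * ((z2 - z4) + (z1 - z2))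
        = -((z2 - z3) * (z1 - z2)⁻¹ * (z2 - z4)) - (z2 - z3) := by
      rw [mul_add, mul_neg, neg_mul, neg_mul, mul_assoc ((z2-z3)) _ (z1 - z2),
        inv_mul_cancel₀ ha, mul_one]
      abel
    rw [e1, e2]
    abel
  unfold crossRatio
  rw [hinv, ← add_mul, key, mul_inv_cancel₀ hd]
end
end

section
/- Let z₁, z₂, z₃, z₄ be pairwise distinct quaternions. Then |[z₁, z₂, z₃, z₄]| = |[z₂, z₁, z₄, z₃]|, where |·| denotes the quaternion norm. -/
noncomputable section

theorem stmt13 (z1 z2 z3 z4 : Quaternion ℝ)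
    (h12 : z1 ≠ z2) (h13 : z1 ≠ z3) (h14 : z1 ≠ z4)
    (h23 : z2 ≠ z3) (h24 : z2 ≠ z4) (h34 : z3 ≠ z4) :
    ‖crossRatio z1 z2 z3 z4‖ = ‖crossRatio z2 z1 z4 z3‖ := by
  simp only [crossRatio, norm_mul, norm_inv, norm_sub_rev z2 z1, norm_sub_rev z4 z3]
  ring
end
end
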